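/- arXiv:2105.00919 — 2 statements merged into one kernel-verified Lean document; each statement's English description precedes it below -/
import Mathlib

section
/- Let n, i be nonnegative integers with 2n² − i² = 1 (so i is odd). Set O = (0,0), M = (4n+3i)·(3/2, 3/2), A = M + (3/2, −3/2), B = 12n·(1,1), C = M − (3/2, −3/2). Then A, B, C have integer coordinates, OABC is a kite with axis of symmetry OB (C is the reflection of A in the line OB, |OA| = |OC| and |AB| = |BC|), and OABC is equable: its area equals its perimeter. (This is family K4 of lattice equable kites.) -/
noncomputable section

/-- Euclidean distance between two points of `ℝ × ℝ`. -/
def dist2 (p q : ℝ × ℝ) : ℝ := Real.sqrt ((p.1 - q.1) ^ 2 + (p.2 - q.2) ^ 2)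

/-- Signed cross product of the vectors `q - p` and `r - p`. -/
def cross (p q r : ℝ × ℝ) : ℝ :=
  (q.1 - p.1) * (r.2 - p.2) - (q.2 - p.2) * (r.1 - p.1)

/-- Three points are collinear. -/
def Collinear3 (p q r : ℝ × ℝ) : Prop := cross p q r = 0

/-- Dot product on `ℝ × ℝ`. -/
def dot2 (p q : ℝ × ℝ) : ℝ := p.1 * q.1 + p.2 * q.2

/-- Closed segment between two points. -/
def Seg (p q : ℝ × ℝ) : Set (ℝ × ℝ) :=
  {x | ∃ t : ℝ, 0 ≤ t ∧ t ≤ 1 ∧ x = (1 - t) • p + t • q}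

/-- Twice the signed (shoelace) area of the quadrilateral `O A B C`. -/
def shoelace (O A B C : ℝ × ℝ) : ℝ :=
  (O.1 * A.2 - A.1 * O.2) + (A.1 * B.2 - B.1 * A.2) +
    (B.1 * C.2 - C.1 * B.2) + (C.1 * O.2 - O.1 * C.2)

/-- Area of the (simple) quadrilateral `O A B C`, by the shoelace formula. -/
def quadArea (O A B C : ℝ × ℝ) : ℝ := |shoelace O A B C| / 2

/-- Perimeter of the quadrilateral `O A B C`. -/
def quadPerim (O A B C : ℝ × ℝ) : ℝ :=
  dist2 O A + dist2 A B + dist2 B C + dist2 C O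

/-- Simple quadrilateral: no three vertices collinear, and the four closed sides
intersect only at shared endpoints. -/
def IsSimpleQuad (O A B C : ℝ × ℝ) : Prop :=
  ¬ Collinear3 O A B ∧ ¬ Collinear3 A B C ∧ ¬ Collinear3 B C O ∧ ¬ Collinear3 C O A ∧
  Seg O A ∩ Seg B C = ∅ ∧ Seg A B ∩ Seg C O = ∅ ∧
  Seg O A ∩ Seg A B = {A} ∧ Seg A B ∩ Seg B C = {B} ∧
  Seg B C ∩ Seg C O = {C} ∧ Seg C O ∩ Seg O A = {O}

/-- Quadrilateral `O A B C`: simple, with vertices in counterclockwise order. -/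
def IsQuad (O A B C : ℝ × ℝ) : Prop :=
  IsSimpleQuad O A B C ∧ 0 < shoelace O A B C

/-- A point of `ℝ × ℝ` with integer coordinates. -/
def IsLatticePt (p : ℝ × ℝ) : Prop := ∃ m n : ℤ, p = ((m : ℝ), (n : ℝ))

/-- An isometry of the Euclidean plane `ℝ × ℝ`. -/
def IsIsometry2 (f : ℝ × ℝ → ℝ × ℝ) : Prop :=
  Function.Bijective f ∧ ∀ p q, dist2 (f p) (f q) = dist2 p q

/-- The four vertices are in convex position: no vertex lies in the convex hull
of the other three. -/
def ConvexPos (O A B C : ℝ × ℝ) : Prop :=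
  O ∉ convexHull ℝ ({A, B, C} : Set (ℝ × ℝ)) ∧
  A ∉ convexHull ℝ ({O, B, C} : Set (ℝ × ℝ)) ∧
  B ∉ convexHull ℝ ({O, A, C} : Set (ℝ × ℝ)) ∧
  C ∉ convexHull ℝ ({O, A, B} : Set (ℝ × ℝ))

/-- The segment `pq` is parallel to the segment `rs`. -/
def Para (p q r s : ℝ × ℝ) : Prop :=
  (q.1 - p.1) * (s.2 - r.2) - (q.2 - p.2) * (s.1 - r.1) = 0

/-- Area of the triangle `p q r`. -/
def triArea (p q r : ℝ × ℝ) : ℝ := |cross p q r| / 2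

/-- Heron's formula: area of a triangle with side lengths `p`, `q`, `r`. -/
def heronArea (p q r : ℝ) : ℝ :=
  Real.sqrt ((p + q + r) * (-p + q + r) * (p - q + r) * (p + q - r)) / 4

end

private lemma seg_coords {P Q x : ℝ × ℝ} (h : x ∈ Seg P Q) :
    ∃ t : ℝ, 0 ≤ t ∧ t ≤ 1 ∧ x.1 = (1 - t) * P.1 + t * Q.1 ∧ x.2 = (1 - t) * P.2 + t * Q.2 := by
  obtain ⟨t, h0, h1, rfl⟩ := h
  exact ⟨t, h0, h1, by simp, by simp⟩

private lemma seg_corner {P Q R : ℝ × ℝ} (h : cross P Q R ≠ 0) :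
    Seg P Q ∩ Seg Q R = {Q} := by
  ext x
  simp only [Set.mem_inter_iff, Set.mem_singleton_iff]
  constructor
  · rintro ⟨h1, h2⟩
    obtain ⟨t, ht0, ht1, e1, e2⟩ := seg_coords h1
    obtain ⟨s, hs0, hs1, f1, f2⟩ := seg_coords h2
    have g1 : (1 - t) * P.1 + t * Q.1 = (1 - s) * Q.1 + s * R.1 := by rw [← e1, ← f1]
    have g2 : (1 - t) * P.2 + t * Q.2 = (1 - s) * Q.2 + s * R.2 := by rw [← e2, ← f2]
    have key : (1 - t) * cross P Q R = 0 := by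
      unfold cross
      linear_combination (Q.2 - R.2) * g1 + (R.1 - Q.1) * g2
    have ht : t = 1 := by
      rcases mul_eq_zero.mp key with h' | h'
      · linarith
      · exact absurd h' h
    have hx1 : x.1 = Q.1 := by rw [e1, ht]; ring
    have hx2 : x.2 = Q.2 := by rw [e2, ht]; ring
    exact Prod.ext hx1 hx2
  · rintro rfl
    exact ⟨⟨1, by norm_num, le_refl 1, by simp⟩, ⟨0, le_refl 0, by norm_num, by simp⟩⟩

private lemma seg_disj {P Q R S : ℝ × ℝ} (h1 : 0 < cross P Q R) (h2 : 0 < cross P Q S) :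
    Seg P Q ∩ Seg R S = ∅ := by
  rw [Set.eq_empty_iff_forall_notMem]
  rintro x ⟨hx1, hx2⟩
  obtain ⟨t, ht0, ht1, e1, e2⟩ := seg_coords hx1
  obtain ⟨s, hs0, hs1, f1, f2⟩ := seg_coords hx2
  have hz : cross P Q x = 0 := by
    unfold cross; linear_combination (Q.1 - P.1) * e2 - (Q.2 - P.2) * e1
  have hv : cross P Q x = (1 - s) * cross P Q R + s * cross P Q S := by
    unfold cross; linear_combination (Q.1 - P.1) * f2 - (Q.2 - P.2) * f1
  rcases le_total (cross P Q R) (cross P Q S) with hle | hle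
  · nlinarith [mul_nonneg hs0 (sub_nonneg.2 hle)]
  · nlinarith [mul_nonneg (sub_nonneg.2 hs1) (sub_nonneg.2 hle)]

private lemma dist2_eq {p q : ℝ × ℝ} {r : ℝ} (hr : 0 ≤ r)
    (h : (p.1 - q.1) ^ 2 + (p.2 - q.2) ^ 2 = r ^ 2) : dist2 p q = r := by
  rw [dist2, h, Real.sqrt_sq hr]

private lemma odd_of_pell {n i : ℤ} (hpell : 2 * n ^ 2 - i ^ 2 = 1) : ∃ k : ℤ, i = 2 * k + 1 := by
  rcases Int.even_or_odd i with ⟨k, hk⟩ | ⟨k, hk⟩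
  · exfalso
    have h2 : (2 : ℤ) ∣ 1 := ⟨n ^ 2 - 2 * k ^ 2, by subst hk; linear_combination -hpell⟩
    norm_num at h2
  · exact ⟨k, hk⟩

/-- Family K4 of lattice equable kites. -/
theorem K4_lattice_equable_kite (n i : ℤ) (hn : 0 ≤ n) (hi : 0 ≤ i)
    (hpell : 2 * n ^ 2 - i ^ 2 = 1) :
    ∀ O M A B C : ℝ × ℝ,
      O = ((0 : ℝ), (0 : ℝ)) →
      M = (4 * (n : ℝ) + 3 * (i : ℝ)) • ((3 / 2 : ℝ), (3 / 2 : ℝ)) →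
      A = M + ((3 / 2 : ℝ), (-(3 / 2) : ℝ)) →
      B = (12 * (n : ℝ)) • ((1 : ℝ), (1 : ℝ)) →
      C = M - ((3 / 2 : ℝ), (-(3 / 2) : ℝ)) →
      IsLatticePt A ∧ IsLatticePt B ∧ IsLatticePt C ∧
      IsQuad O A B C ∧
      Collinear3 O B ((1 / 2 : ℝ) • (A + C)) ∧ dot2 (C - A) (B - O) = 0 ∧
      dist2 O A = dist2 O C ∧ dist2 A B = dist2 B C ∧
      quadArea O A B C = quadPerim O A B C := by
  intro O M A B C hO hM hA hB hC
  subst hM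
  have hA' : A = (((4 * (n : ℝ) + 3 * (i : ℝ)) * (3 / 2) + 3 / 2,
      (4 * (n : ℝ) + 3 * (i : ℝ)) * (3 / 2) - 3 / 2) : ℝ × ℝ) := by
    rw [hA]; refine Prod.ext ?_ ?_ <;> simp <;> ring
  have hC' : C = (((4 * (n : ℝ) + 3 * (i : ℝ)) * (3 / 2) - 3 / 2,
      (4 * (n : ℝ) + 3 * (i : ℝ)) * (3 / 2) + 3 / 2) : ℝ × ℝ) := by
    rw [hC]; refine Prod.ext ?_ ?_ <;> simp <;> ring
  have hB' : B = ((12 * (n : ℝ), 12 * (n : ℝ)) : ℝ × ℝ) := by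
    rw [hB]; refine Prod.ext ?_ ?_ <;> simp
  clear hA hB hC
  subst hO hA' hB' hC'
  -- basic arithmetic facts
  have hpr : 2 * (n : ℝ) ^ 2 - (i : ℝ) ^ 2 = 1 := by exact_mod_cast hpell
  have hn1 : 1 ≤ n := by
    by_contra h
    have hn0 : n = 0 := by omega
    subst hn0
    nlinarith [sq_nonneg i, hpell]
  have hi1 : 1 ≤ i := by
    by_contra h
    have hi0 : i = 0 := by omega
    subst hi0
    have h2 : (2 : ℤ) ∣ 1 := ⟨n ^ 2, by linear_combination -hpell⟩
    norm_num at h2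
  have h32 : 2 * i ≤ 3 * n := by
    by_contra h
    have key : (3 * n - 2 * i) * (3 * n + 2 * i) = n ^ 2 + 4 := by linear_combination 4 * hpell
    have h5 : (5 : ℤ) ≤ 3 * n + 2 * i := by omega
    have hneg : 3 * n - 2 * i ≤ -1 := by omega
    nlinarith [key, sq_nonneg n, mul_nonneg (by linarith : (0:ℤ) ≤ -(3 * n - 2 * i + 1)) (by linarith : (0:ℤ) ≤ 3 * n + 2 * i)]
  have hN1 : (1 : ℝ) ≤ (n : ℝ) := by exact_mod_cast hn1
  have hI1 : (1 : ℝ) ≤ (i : ℝ) := by exact_mod_cast hi1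
  have h32R : 2 * (i : ℝ) ≤ 3 * (n : ℝ) := by exact_mod_cast h32
  -- cross products
  have hcOAB : cross ((0:ℝ), (0:ℝ)) ((4 * (n : ℝ) + 3 * (i : ℝ)) * (3 / 2) + 3 / 2,
      (4 * (n : ℝ) + 3 * (i : ℝ)) * (3 / 2) - 3 / 2) (12 * (n : ℝ), 12 * (n : ℝ)) = 36 * (n:ℝ) := by
    simp only [cross]; ring
  have hcOAC : cross ((0:ℝ), (0:ℝ)) ((4 * (n : ℝ) + 3 * (i : ℝ)) * (3 / 2) + 3 / 2,
      (4 * (n : ℝ) + 3 * (i : ℝ)) * (3 / 2) - 3 / 2)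
      ((4 * (n : ℝ) + 3 * (i : ℝ)) * (3 / 2) - 3 / 2,
      (4 * (n : ℝ) + 3 * (i : ℝ)) * (3 / 2) + 3 / 2) = 36 * (n:ℝ) + 27 * (i:ℝ) := by
    simp only [cross]; ring
  have hcABC : cross ((4 * (n : ℝ) + 3 * (i : ℝ)) * (3 / 2) + 3 / 2,
      (4 * (n : ℝ) + 3 * (i : ℝ)) * (3 / 2) - 3 / 2) (12 * (n : ℝ), 12 * (n : ℝ))
      ((4 * (n : ℝ) + 3 * (i : ℝ)) * (3 / 2) - 3 / 2,
      (4 * (n : ℝ) + 3 * (i : ℝ)) * (3 / 2) + 3 / 2) = 36 * (n:ℝ) - 27 * (i:ℝ) := by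
    simp only [cross]; ring
  have hcBCO : cross (12 * (n : ℝ), 12 * (n : ℝ))
      ((4 * (n : ℝ) + 3 * (i : ℝ)) * (3 / 2) - 3 / 2,
      (4 * (n : ℝ) + 3 * (i : ℝ)) * (3 / 2) + 3 / 2) ((0:ℝ), (0:ℝ)) = 36 * (n:ℝ) := by
    simp only [cross]; ring
  have hcCOA : cross ((4 * (n : ℝ) + 3 * (i : ℝ)) * (3 / 2) - 3 / 2,
      (4 * (n : ℝ) + 3 * (i : ℝ)) * (3 / 2) + 3 / 2) ((0:ℝ), (0:ℝ))
      ((4 * (n : ℝ) + 3 * (i : ℝ)) * (3 / 2) + 3 / 2,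
      (4 * (n : ℝ) + 3 * (i : ℝ)) * (3 / 2) - 3 / 2) = 36 * (n:ℝ) + 27 * (i:ℝ) := by
    simp only [cross]; ring
  have hcCOB : cross ((4 * (n : ℝ) + 3 * (i : ℝ)) * (3 / 2) - 3 / 2,
      (4 * (n : ℝ) + 3 * (i : ℝ)) * (3 / 2) + 3 / 2) ((0:ℝ), (0:ℝ))
      (12 * (n : ℝ), 12 * (n : ℝ)) = 36 * (n:ℝ) := by
    simp only [cross]; ring
  have hpos1 : (0:ℝ) < 36 * (n:ℝ) := by linarith
  have hpos2 : (0:ℝ) < 36 * (n:ℝ) + 27 * (i:ℝ) := by linarith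
  have hABCne : 36 * (n:ℝ) - 27 * (i:ℝ) ≠ 0 := by
    intro h
    have hz : 4 * n = 3 * i := by
      have : 4 * (n:ℝ) = 3 * (i:ℝ) := by linarith
      exact_mod_cast this
    have h9 : 2 * n ^ 2 = 9 := by linear_combination 9 * hpell - (4 * n + 3 * i) * hz
    have h2 : (2 : ℤ) ∣ 9 := ⟨n ^ 2, h9.symm⟩
    norm_num at h2
  -- distances
  have hdOA : dist2 ((0:ℝ), (0:ℝ)) ((4 * (n : ℝ) + 3 * (i : ℝ)) * (3 / 2) + 3 / 2,
      (4 * (n : ℝ) + 3 * (i : ℝ)) * (3 / 2) - 3 / 2) = 3 * (3 * (n:ℝ) + 2 * (i:ℝ)) := by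
    apply dist2_eq (by linarith)
    simp only []
    linear_combination (-(9:ℝ)/2) * hpr
  have hdOC : dist2 ((0:ℝ), (0:ℝ)) ((4 * (n : ℝ) + 3 * (i : ℝ)) * (3 / 2) - 3 / 2,
      (4 * (n : ℝ) + 3 * (i : ℝ)) * (3 / 2) + 3 / 2) = 3 * (3 * (n:ℝ) + 2 * (i:ℝ)) := by
    apply dist2_eq (by linarith)
    simp only []
    linear_combination (-(9:ℝ)/2) * hpr
  have hdCO : dist2 ((4 * (n : ℝ) + 3 * (i : ℝ)) * (3 / 2) - 3 / 2,
      (4 * (n : ℝ) + 3 * (i : ℝ)) * (3 / 2) + 3 / 2) ((0:ℝ), (0:ℝ)) = 3 * (3 * (n:ℝ) + 2 * (i:ℝ)) := by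
    apply dist2_eq (by linarith)
    simp only []
    linear_combination (-(9:ℝ)/2) * hpr
  have hdAB : dist2 ((4 * (n : ℝ) + 3 * (i : ℝ)) * (3 / 2) + 3 / 2,
      (4 * (n : ℝ) + 3 * (i : ℝ)) * (3 / 2) - 3 / 2) (12 * (n : ℝ), 12 * (n : ℝ)) = 3 * (3 * (n:ℝ) - 2 * (i:ℝ)) := by
    apply dist2_eq (by linarith)
    simp only []
    linear_combination (-(9:ℝ)/2) * hpr
  have hdBC : dist2 (12 * (n : ℝ), 12 * (n : ℝ)) ((4 * (n : ℝ) + 3 * (i : ℝ)) * (3 / 2) - 3 / 2,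
      (4 * (n : ℝ) + 3 * (i : ℝ)) * (3 / 2) + 3 / 2) = 3 * (3 * (n:ℝ) - 2 * (i:ℝ)) := by
    apply dist2_eq (by linarith)
    simp only []
    linear_combination (-(9:ℝ)/2) * hpr
  -- shoelace
  have hsl : shoelace ((0:ℝ), (0:ℝ)) ((4 * (n : ℝ) + 3 * (i : ℝ)) * (3 / 2) + 3 / 2,
      (4 * (n : ℝ) + 3 * (i : ℝ)) * (3 / 2) - 3 / 2) (12 * (n : ℝ), 12 * (n : ℝ))
      ((4 * (n : ℝ) + 3 * (i : ℝ)) * (3 / 2) - 3 / 2,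
      (4 * (n : ℝ) + 3 * (i : ℝ)) * (3 / 2) + 3 / 2) = 72 * (n:ℝ) := by
    simp only [shoelace]; ring
  obtain ⟨k, hk⟩ := odd_of_pell hpell
  have hkr : (i : ℝ) = 2 * (k : ℝ) + 1 := by exact_mod_cast hk
  refine ⟨⟨6 * n + 9 * k + 6, 6 * n + 9 * k + 3, ?_⟩,
         ⟨12 * n, 12 * n, ?_⟩,
         ⟨6 * n + 9 * k + 3, 6 * n + 9 * k + 6, ?_⟩,
         ⟨⟨?_, ?_, ?_, ?_, ?_, ?_, ?_, ?_, ?_, ?_⟩, ?_⟩, ?_, ?_, ?_, ?_, ?_⟩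
  · simp only [Prod.mk.injEq]
    constructor <;> (push_cast [hkr]; ring)
  · simp only [Prod.mk.injEq]
    constructor <;> push_cast <;> ring
  · simp only [Prod.mk.injEq]
    constructor <;> (push_cast [hkr]; ring)
  · rw [Collinear3, hcOAB]; positivity
  · rw [Collinear3, hcABC]; exact hABCne
  · rw [Collinear3, hcBCO]; positivity
  · rw [Collinear3, hcCOA]; positivity
  · exact seg_disj (by rw [hcOAB]; exact hpos1) (by rw [hcOAC]; exact hpos2)
  · rw [Set.inter_comm]
    exact seg_disj (by rw [hcCOA]; exact hpos2) (by rw [hcCOB]; exact hpos1)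
  · exact seg_corner (by rw [hcOAB]; positivity)
  · exact seg_corner (by rw [hcABC]; exact hABCne)
  · exact seg_corner (by rw [hcBCO]; positivity)
  · exact seg_corner (by rw [hcCOA]; positivity)
  · rw [hsl]; linarith
  · simp only [Collinear3, cross, Prod.mk_add_mk, Prod.smul_mk, smul_eq_mul,
      Prod.fst_add, Prod.snd_add]
    ring
  · simp only [dot2, Prod.mk_sub_mk, Prod.fst_sub, Prod.snd_sub]
    ring
  · rw [hdOA, hdOC]
  · rw [hdAB, hdBC]
  · rw [quadArea, hsl, quadPerim, hdOA, hdAB, hdBC, hdCO]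
    rw [abs_of_nonneg (by linarith)]
    ring
end

section
/- Let OABC be a trapezoid with OA parallel to BC and a = |OA| > c = |BC|, with legs b = |AB| and d = |CO|, all four side lengths being integers, and whose area equals its perimeter. Then the triangle with side lengths a−c, b, d (obtained by translating side AB along the parallel direction to cut off a triangle from the trapezoid) is a perimeter-dominant Heronian triangle: its area is a positive integer and is strictly less than its perimeter (a−c) + b + d. -/
/-!
Parallelism together with the non-crossing of `AB` and `CO` forces `C - B = -(c/a)(A - O)`.
Translating the leg `AB` by `C - B` cuts off a triangle with sides `a - c, b, d` and the same
height `h` as the trapezoid, so its area is `T = (a - c)h/2` while the trapezoid has area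
`(a + c)h/2 = a + b + c + d`. Hence `T = (a - c)(a + b + c + d)/(a + c)` is rational and falls
short of the perimeter `a - c + b + d` by `2c(b + d)/(a + c)`. Finally `16T²` is the integer
Heron product, so `4T` is an integer, and reducing Heron's formula modulo `4` shows `4 ∣ 4T`.
-/

lemma dist2_sq (p q : ℝ × ℝ) : dist2 p q ^ 2 = (p.1 - q.1) ^ 2 + (p.2 - q.2) ^ 2 :=
  Real.sq_sqrt (by positivity)

lemma dist2_nonneg (p q : ℝ × ℝ) : 0 ≤ dist2 p q := Real.sqrt_nonneg _

lemma dist2_pos_of_ne {p q : ℝ × ℝ} (h : p ≠ q) : 0 < dist2 p q := by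
  refine Real.sqrt_pos.mpr ?_
  rcases not_and_or.mp (mt Prod.ext_iff.mpr h) with h1 | h2
  · have := sq_pos_of_ne_zero (sub_ne_zero.mpr h1); positivity
  · have := sq_pos_of_ne_zero (sub_ne_zero.mpr h2); positivity

lemma ne_of_not_collinear3 {p q r : ℝ × ℝ} (h : ¬ Collinear3 p q r) : p ≠ q := by
  rintro rfl
  exact h (by simp [Collinear3, cross])

lemma dist2_eq_abs_mul_of_sub_eq_smul {p q p' q' : ℝ × ℝ} {k : ℝ}
    (h : q' - p' = k • (q - p)) : dist2 p' q' = |k| * dist2 p q := by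
  have h1 : p'.1 - q'.1 = k * (p.1 - q.1) := by
    have := congrArg Prod.fst h; simp only [Prod.fst_sub, Prod.smul_fst, smul_eq_mul] at this
    linarith
  have h2 : p'.2 - q'.2 = k * (p.2 - q.2) := by
    have := congrArg Prod.snd h; simp only [Prod.snd_sub, Prod.smul_snd, smul_eq_mul] at this
    linarith
  rw [dist2, dist2, h1, h2, ← Real.sqrt_sq_eq_abs, ← Real.sqrt_mul (sq_nonneg k)]
  ring_nf

lemma heron_product_dist2 (P Q R : ℝ × ℝ) :
    let p := dist2 P Q; let q := dist2 Q R; let r := dist2 R P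
    (p + q + r) * (-p + q + r) * (p - q + r) * (p + q - r) = (2 * cross P Q R) ^ 2 := by
  intro p q r
  have heron : (p + q + r) * (-p + q + r) * (p - q + r) * (p + q - r) =
      2 * p ^ 2 * q ^ 2 + 2 * q ^ 2 * r ^ 2 + 2 * r ^ 2 * p ^ 2 -
        (p ^ 2) ^ 2 - (q ^ 2) ^ 2 - (r ^ 2) ^ 2 := by ring
  rw [heron, dist2_sq, dist2_sq, dist2_sq, cross]
  ring

lemma heronArea_dist2 (P Q R : ℝ × ℝ) :
    heronArea (dist2 P Q) (dist2 Q R) (dist2 R P) = triArea P Q R := by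
  rw [heronArea, heron_product_dist2, Real.sqrt_sq_eq_abs, abs_mul, abs_two, triArea]
  ring

lemma Para.exists_sub_eq_smul {p q r s : ℝ × ℝ} (h : Para p q r s) (hpq : p ≠ q) :
    ∃ l : ℝ, s - r = l • (q - p) := by
  rw [Para] at h
  have hn : (q.1 - p.1) ^ 2 + (q.2 - p.2) ^ 2 ≠ 0 := by
    have := pow_pos (dist2_pos_of_ne hpq) 2
    rw [dist2_sq] at this
    intro h0; linarith
  refine ⟨((q.1 - p.1) * (s.1 - r.1) + (q.2 - p.2) * (s.2 - r.2)) /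
    ((q.1 - p.1) ^ 2 + (q.2 - p.2) ^ 2), Prod.ext ?_ ?_⟩ <;>
  simp only [Prod.fst_sub, Prod.snd_sub, Prod.smul_fst, Prod.smul_snd, smul_eq_mul] <;>
  field_simp
  · linear_combination (p.2 - q.2) * h
  · linear_combination (q.1 - p.1) * h

lemma seg_inter_seg_nonempty_of_sub_eq_smul {O A B C : ℝ × ℝ} {l : ℝ} (hl : 0 ≤ l)
    (h : C - B = l • (A - O)) : (Seg A B ∩ Seg C O).Nonempty := by
  obtain rfl : C = B + l • (A - O) := sub_eq_iff_eq_add'.mp h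
  have hl1 : 0 < 1 + l := by linarith
  -- the common point divides `AB` in the ratio `1 : l` and `CO` in the ratio `l : 1`
  refine ⟨(1 + l)⁻¹ • (l • A + B),
    ⟨(1 + l)⁻¹, by positivity, inv_le_one_of_one_le₀ (by linarith), ?_⟩,
    ⟨l / (1 + l), by positivity, (div_le_one hl1).mpr (by linarith), ?_⟩⟩ <;>
  · match_scalars <;> field_simp <;> ring

lemma shoelace_of_sub_eq_smul {O A B C : ℝ × ℝ} {l : ℝ} (h : C - B = l • (A - O)) :
    shoelace O A B C = (1 - l) * cross O A B := by
  obtain rfl : C = B + l • (A - O) := sub_eq_iff_eq_add'.mp h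
  simp only [shoelace, cross, Prod.fst_add, Prod.snd_add, Prod.smul_fst, Prod.smul_snd,
    Prod.fst_sub, Prod.snd_sub, smul_eq_mul]
  ring

lemma cross_add_sub_of_sub_eq_smul {O A B C : ℝ × ℝ} {l : ℝ} (h : C - B = l • (A - O)) :
    cross O (A + (C - B)) C = (1 + l) * cross O A B := by
  obtain rfl : C = B + l • (A - O) := sub_eq_iff_eq_add'.mp h
  simp only [cross, Prod.fst_add, Prod.snd_add, Prod.smul_fst, Prod.smul_snd,
    Prod.fst_sub, Prod.snd_sub, smul_eq_mul]
  ring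

lemma IsSimpleQuad.exists_neg_smul_of_para {O A B C : ℝ × ℝ} (hq : IsSimpleQuad O A B C)
    (hp : Para O A B C) : ∃ l : ℝ, l < 0 ∧ C - B = l • (A - O) := by
  obtain ⟨l, hl⟩ := hp.exists_sub_eq_smul (ne_of_not_collinear3 hq.1)
  refine ⟨l, lt_of_not_ge fun h0 => ?_, hl⟩
  exact (seg_inter_seg_nonempty_of_sub_eq_smul h0 hl).ne_empty hq.2.2.2.2.2.1

/-- Translating the leg `AB` by `C - B` cuts off a triangle with the same height as the
trapezoid and base `|OA| - |BC|`. -/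
lemma heronArea_cut_mul_eq {O A B C : ℝ × ℝ} {l : ℝ} (h : C - B = l • (A - O))
    (hl : l ≤ 0) (hle : dist2 B C ≤ dist2 O A) :
    heronArea (dist2 O A - dist2 B C) (dist2 A B) (dist2 C O) * (dist2 O A + dist2 B C) =
      (dist2 O A - dist2 B C) * quadArea O A B C := by
  have hc : dist2 B C = -l * dist2 O A := by
    rw [dist2_eq_abs_mul_of_sub_eq_smul h, abs_of_nonpos hl]
  have habs : |1 + l| * dist2 O A = dist2 O A - dist2 B C := by
    rw [hc]
    rcases (dist2_nonneg O A).eq_or_lt with ha | ha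
    · rw [← ha]; ring
    · rw [abs_of_nonneg (by rw [hc] at hle; nlinarith)]; ring
  have hOD : dist2 O (A + (C - B)) = dist2 O A - dist2 B C := by
    have hD : A + (C - B) - O = (1 + l) • (A - O) := by rw [h]; module
    rw [dist2_eq_abs_mul_of_sub_eq_smul hD, habs]
  have hDC : dist2 (A + (C - B)) C = dist2 A B := by
    have hD : C - (A + (C - B)) = (1 : ℝ) • (B - A) := by module
    rw [dist2_eq_abs_mul_of_sub_eq_smul hD, abs_one, one_mul]
  rw [← hOD, ← hDC, heronArea_dist2, triArea, cross_add_sub_of_sub_eq_smul h, quadArea,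
    shoelace_of_sub_eq_smul h, abs_mul, abs_mul, abs_of_nonneg (by linarith : 0 ≤ 1 - l), hOD,
    ← habs, hc]
  ring

lemma four_dvd_of_sq_eq_heron {p q r k : ℤ}
    (h : k ^ 2 = (p + q + r) * (-p + q + r) * (p - q + r) * (p + q - r)) : 4 ∣ k := by
  rcases Int.even_or_odd (p + q + r) with ⟨s, hs⟩ | hodd
  · obtain rfl : r = s + s - p - q := by omega
    have h16 : 4 ^ 2 ∣ k ^ 2 := ⟨s * (s - p) * (s - q) * (p + q - s), by rw [h]; ring⟩
    exact (Int.pow_dvd_pow_iff two_ne_zero).mp h16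
  · obtain ⟨j, hj⟩ : Odd (q ^ 2 + r ^ 2 - p ^ 2) := by
      simp only [parity_simps, ← Int.not_even_iff_odd] at hodd ⊢; tauto
    -- `16 · area² = 4 q² r² - (q² + r² - p²)²`, and an odd square is `1` modulo `4`
    have hsum : k ^ 2 + (2 * j + 1) ^ 2 = 4 * (q * r) ^ 2 := by rw [h, ← hj]; ring
    have hmod := congrArg (fun x : ℤ => (x : ZMod 4)) hsum
    push_cast at hmod
    rw [show (4 : ZMod 4) = 0 from rfl, zero_mul] at hmod
    exact absurd hmod ((by decide : ∀ x y : ZMod 4, x ^ 2 + (2 * y + 1) ^ 2 ≠ 0) _ _)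

lemma exists_int_eq_of_heronArea_eq_ratCast {p q r : ℤ} {t : ℚ}
    (h : heronArea p q r = t) : ∃ m : ℤ, t = m := by
  set X := (p + q + r) * (-p + q + r) * (p - q + r) * (p + q - r) with hX
  have hsqrt : √(X : ℝ) = 4 * t := by
    rw [hX]; push_cast; rw [← h, heronArea]; ring
  rcases lt_or_ge X 0 with hneg | hnonneg
  · rw [Real.sqrt_eq_zero_of_nonpos (by exact_mod_cast hneg.le)] at hsqrt
    exact ⟨0, by exact_mod_cast (by linarith : (t : ℝ) = 0)⟩
  · obtain ⟨k, hk⟩ : IsSquare X := by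
      by_contra hns
      refine Rat.not_irrational (4 * t) ?_
      exact_mod_cast hsqrt ▸ irrational_sqrt_intCast_iff.mpr ⟨hns, hnonneg⟩
    obtain ⟨m, hm⟩ := four_dvd_of_sq_eq_heron (p := p) (q := q) (r := r) (k := |k|)
      (by rw [sq_abs, ← hX, hk, sq])
    refine ⟨m, ?_⟩
    have h4t : 4 * (t : ℝ) = 4 * m := by
      rw [← hsqrt, hk, Int.cast_mul, Real.sqrt_mul_self_eq_abs, ← Int.cast_abs, hm]; push_cast
      ring
    exact_mod_cast (by linarith : (t : ℝ) = m)

lemma pos_and_lt_of_mul_add_eq_sub_mul {T a b c d : ℝ} (hb : 0 < b) (hd : 0 ≤ d) (hc : 0 < c)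
    (hca : c < a) (h : T * (a + c) = (a - c) * (a + b + c + d)) :
    0 < T ∧ T < a - c + b + d := by
  have hac : 0 < a + c := by linarith
  have hT : 0 < T * (a + c) := h ▸ mul_pos (sub_pos.mpr hca) (by linarith)
  have hgap : (a - c + b + d - T) * (a + c) = 2 * c * (b + d) := by linear_combination -h
  have hgap_pos : 0 < (a - c + b + d - T) * (a + c) := hgap ▸ by positivity
  exact ⟨pos_of_mul_pos_left hT hac.le, by linarith [pos_of_mul_pos_left hgap_pos hac.le]⟩

theorem equable_trapezoid_cut_triangle_general (O A B C : ℝ × ℝ) (a b c d : ℤ)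
    (hquad : IsQuad O A B C)
    (hpara : Para O A B C)
    (ha : dist2 O A = (a : ℝ)) (hb : dist2 A B = (b : ℝ))
    (hc : dist2 B C = (c : ℝ)) (hd : dist2 C O = (d : ℝ))
    (hca : c < a)
    (hequable : quadArea O A B C = quadPerim O A B C) :
    ∃ m : ℤ, 0 < m ∧ heronArea ((a : ℝ) - (c : ℝ)) (b : ℝ) (d : ℝ) = (m : ℝ) ∧
      heronArea ((a : ℝ) - (c : ℝ)) (b : ℝ) (d : ℝ) < ((a : ℝ) - (c : ℝ)) + (b : ℝ) + (d : ℝ) := by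
  obtain ⟨l, hl, hCB⟩ := hquad.1.exists_neg_smul_of_para hpara
  have hb0 : (0 : ℝ) < b := hb ▸ dist2_pos_of_ne (ne_of_not_collinear3 hquad.1.2.1)
  have hc0 : (0 : ℝ) < c := hc ▸ dist2_pos_of_ne (ne_of_not_collinear3 hquad.1.2.2.1)
  have hca' : (c : ℝ) < a := by exact_mod_cast hca
  have hcut := heronArea_cut_mul_eq hCB hl.le (ha ▸ hc ▸ hca'.le)
  rw [hequable, quadPerim, ha, hb, hc, hd] at hcut
  obtain ⟨hpos, hlt⟩ :=
    pos_and_lt_of_mul_add_eq_sub_mul hb0 (hd ▸ dist2_nonneg C O) hc0 hca' hcut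
  have hrat : heronArea ((a - c : ℤ) : ℝ) b d =
      (((a - c) * (a + b + c + d) / (a + c) : ℚ) : ℝ) := by
    push_cast
    rw [eq_div_iff (by linarith), hcut]
  obtain ⟨m, hm⟩ := exists_int_eq_of_heronArea_eq_ratCast hrat
  rw [hm, Rat.cast_intCast] at hrat
  push_cast at hrat
  exact ⟨m, by exact_mod_cast hrat ▸ hpos, hrat, hlt⟩

/-- cutting an equable integer-sided trapezoid along a translate
of a leg yields a perimeter-dominant Heronian triangle. -/
theorem equable_trapezoid_cut_triangle (O A B C : ℝ × ℝ) (a b c d : ℤ)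
    (hquad : IsQuad O A B C)
    (hpara : Para O A B C) (hnpara : ¬ Para A B C O)
    (ha : dist2 O A = (a : ℝ)) (hb : dist2 A B = (b : ℝ))
    (hc : dist2 B C = (c : ℝ)) (hd : dist2 C O = (d : ℝ))
    (hca : c < a)
    (hequable : quadArea O A B C = quadPerim O A B C) :
    ∃ m : ℤ, 0 < m ∧ heronArea ((a : ℝ) - (c : ℝ)) (b : ℝ) (d : ℝ) = (m : ℝ) ∧
      heronArea ((a : ℝ) - (c : ℝ)) (b : ℝ) (d : ℝ) < ((a : ℝ) - (c : ℝ)) + (b : ℝ) + (d : ℝ) :=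
  equable_trapezoid_cut_triangle_general O A B C a b c d hquad hpara ha hb hc hd hca hequable
end
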